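/- Let G be a finitely generated group having only finitely many distinct finite simple quotients (i.e., only finitely many isomorphism classes of finite simple groups occur as quotients G/N over normal subgroups N of G). Then G is finitely annihilated if and only if the abelianisation G^ab is non-cyclic. -/

import Mathlib

/-- A group `G` is *finitely annihilated* if every element of `G` lies in some
proper normal finite-index subgroup of `G`. -/
def FinitelyAnnihilated (G : Type*) [Group G] : Prop :=
  ∀ g : G, ∃ N : Subgroup G, N.Normal ∧ N ≠ ⊤ ∧ N.FiniteIndex ∧ g ∈ N

/-!
If `Gᵃᵇ` is not cyclic, the image of any `g : G` generates a proper subgroup of the finitely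
generated abelian group `Gᵃᵇ`, hence lies in a maximal subgroup, which has prime index; its
preimage in `G` is the required subgroup.

Conversely, let `Gᵃᵇ` be generated by the image of `g`. A maximal normal subgroup of finite index
is the kernel of a map from the finitely generated group `G` onto one of finitely many finite
simple groups, so there are only finitely many of them, say `M₁, …, Mₙ`. For those `Mᵢ` with
nonabelian quotient, `[G, G]` maps onto `∏ G ⧸ Mᵢ`, so some `g * c` with `c ∈ [G, G]` lies in none
of them. A proper normal subgroup of finite index containing `g * c` lies in a maximal normal
subgroup `M` of finite index. As `g * c` generates `G` modulo `[G, G]`, `M` does not contain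
`[G, G]`, so `M` is one of the `Mᵢ`, which is absurd.
-/

namespace Subgroup

variable {G : Type*} [Group G]

structure IsMaximalNormal (M : Subgroup G) : Prop where
  normal : M.Normal
  ne_top : M ≠ ⊤
  eq_of_le : ∀ K : Subgroup G, K.Normal → K ≠ ⊤ → M ≤ K → K = M

theorem sSup_ne_top_of_directedOn [Group.FG G] {c : Set (Subgroup G)} (hne : c.Nonempty)
    (hc : DirectedOn (· ≤ ·) c) (htop : ∀ K ∈ c, K ≠ ⊤) : sSup c ≠ ⊤ := by
  obtain ⟨S, hS⟩ := Group.FG.out (G := G)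
  intro h
  have hSc : (S : Set G) ⊆ ⋃ K ∈ c, (K : Set G) := fun x _ => by
    simpa using (mem_sSup_of_directedOn hne hc).1 (h ▸ mem_top x)
  obtain ⟨K, hK, hSK⟩ := hc.exists_mem_subset_of_finset_subset_biUnion hne hSc
  exact htop K hK (eq_top_iff.2 (hS ▸ (closure_le K).2 hSK))

theorem exists_le_isMaximalNormal [Group.FG G] {T : Subgroup G} [T.Normal] (hT : T ≠ ⊤) :
    ∃ M : Subgroup G, M.IsMaximalNormal ∧ T ≤ M := by
  obtain ⟨M, hTM, hM⟩ := zorn_le_nonempty₀ {K : Subgroup G | K.Normal ∧ K ≠ ⊤}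
    (fun c hcs hchain K hK => ⟨sSup c, ⟨sSup_normal c fun K hK => (hcs hK).1,
      sSup_ne_top_of_directedOn ⟨K, hK⟩ hchain.directedOn fun K hK => (hcs hK).2⟩,
      fun _ => le_sSup⟩) T ⟨‹_›, hT⟩
  exact ⟨M, ⟨hM.prop.1, hM.prop.2, fun K hKn hK hMK => le_antisymm (hM.2 ⟨hKn, hK⟩ hMK) hMK⟩, hTM⟩

theorem map_mk'_eq_top_iff (M : Subgroup G) [M.Normal] (K : Subgroup G) :
    K.map (QuotientGroup.mk' M) = ⊤ ↔ K ⊔ M = ⊤ := by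
  rw [← (comap_injective (QuotientGroup.mk'_surjective M)).eq_iff, comap_map_eq, comap_top,
    QuotientGroup.ker_mk']

namespace IsMaximalNormal

variable {M : Subgroup G} (hM : M.IsMaximalNormal)
include hM

theorem isSimpleGroup_quotient : haveI := hM.normal; IsSimpleGroup (G ⧸ M) := by
  have := hM.normal
  have : Nontrivial (G ⧸ M) := QuotientGroup.nontrivial_iff.2 hM.ne_top
  refine ⟨fun R hR => ?_⟩
  have hMR : M ≤ R.comap (QuotientGroup.mk' M) :=
    (QuotientGroup.ker_mk' M).ge.trans (MonoidHom.ker_le_comap _ R)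
  have hinj := comap_injective (QuotientGroup.mk'_surjective M)
  by_cases htop : R.comap (QuotientGroup.mk' M) = ⊤
  · exact .inr (hinj (htop.trans (comap_top _).symm))
  · refine .inl (hinj ?_)
    rw [hM.eq_of_le _ (hR.comap _) htop hMR, MonoidHom.comap_bot, QuotientGroup.ker_mk']

theorem sup_eq_top_of_not_le {K : Subgroup G} [K.Normal] (hKM : ¬ K ≤ M) : K ⊔ M = ⊤ := by
  have := hM.normal
  by_contra hne
  exact hKM (le_sup_left.trans (hM.eq_of_le _ inferInstance hne le_sup_right).le)

theorem sup_eq_top_of_ne {M' : Subgroup G} (hM' : M'.IsMaximalNormal) (hne : M' ≠ M) :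
    M' ⊔ M = ⊤ :=
  have := hM'.normal
  hM.sup_eq_top_of_not_le fun hle => hne (hM'.eq_of_le M hM.normal hM.ne_top hle).symm

/-- The image of `⁅A, B⁆ ≤ A ⊓ B` in `G ⧸ M` is the commutator subgroup of `G ⧸ M`, which is
everything because `G ⧸ M` is simple and nonabelian. -/
theorem inf_sup_eq_top (hcomm : ¬ _root_.commutator G ≤ M) {A B : Subgroup G} [A.Normal]
    [B.Normal] (hAM : A ⊔ M = ⊤) (hBM : B ⊔ M = ⊤) : A ⊓ B ⊔ M = ⊤ := by
  have := hM.normal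
  set π := QuotientGroup.mk' M
  have hC : (_root_.commutator G).map π = ⊤ :=
    (map_mk'_eq_top_iff M _).2 (hM.sup_eq_top_of_not_le hcomm)
  rw [← map_mk'_eq_top_iff] at hAM hBM ⊢
  refine eq_top_iff.2 ?_
  calc ⊤ = (_root_.commutator G).map π := hC.symm
    _ = ⁅A.map π, B.map π⁆ := by
      rw [_root_.commutator_def, map_commutator,
        map_top_of_surjective _ (QuotientGroup.mk'_surjective M), hAM, hBM]
    _ = ⁅A, B⁆.map π := (map_commutator A B π).symm
    _ ≤ (A ⊓ B).map π := map_mono (commutator_le_inf A B)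

theorem inf_iInf_sup_eq_top (hcomm : ¬ _root_.commutator G ≤ M) (t : Finset (Subgroup G))
    (ht : ∀ M' ∈ t, M'.IsMaximalNormal) (hMt : M ∉ t) {A : Subgroup G} [A.Normal]
    (hA : A ⊔ M = ⊤) : A ⊓ (⨅ M' ∈ t, M') ⊔ M = ⊤ := by
  classical
  induction t using Finset.induction_on generalizing A with
  | empty => simpa using hA
  | insert M' t hM't ih =>
    have hM' := ht M' (Finset.mem_insert_self M' t)
    have := hM'.normal
    rw [Finset.iInf_insert, ← inf_assoc]
    refine ih (fun K hK => ht K (Finset.mem_insert_of_mem hK))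
      (fun h => hMt (Finset.mem_insert_of_mem h)) (hM.inf_sup_eq_top hcomm hA ?_)
    exact hM.sup_eq_top_of_ne hM' fun h => hMt (h ▸ Finset.mem_insert_self M' t)

end IsMaximalNormal

end Subgroup

open Subgroup

section

variable {G : Type*} [Group G]

theorem exists_mem_commutator_forall_mul_notMem (t : Finset (Subgroup G))
    (ht : ∀ M ∈ t, M.IsMaximalNormal ∧ ¬ commutator G ≤ M) (g : G) :
    ∃ c ∈ commutator G, ∀ M ∈ t, g * c ∉ M := by
  classical
  induction t using Finset.induction_on with
  | empty => exact ⟨1, one_mem _, by simp⟩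
  | insert M₀ t hM₀t ih =>
    obtain ⟨hM₀, hM₀c⟩ := ht M₀ (Finset.mem_insert_self M₀ t)
    have ht' (M) (hM : M ∈ t) := ht M (Finset.mem_insert_of_mem hM)
    obtain ⟨c, hc, hgc⟩ := ih ht'
    by_cases hgcM₀ : g * c ∈ M₀
    · have hsup := hM₀.inf_iInf_sup_eq_top hM₀c t (fun M hM => (ht' M hM).1) hM₀t
        (A := commutator G) (hM₀.sup_eq_top_of_not_le hM₀c)
      obtain ⟨c', hc'mem, hc'M₀⟩ : ∃ c' ∈ commutator G ⊓ ⨅ M ∈ t, M, c' ∉ M₀ :=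
        SetLike.not_le_iff_exists.1 fun hle => hM₀.ne_top (sup_eq_right.2 hle ▸ hsup)
      have hc't : ∀ M ∈ t, c' ∈ M := by simpa using (mem_inf.1 hc'mem).2
      refine ⟨c * c', mul_mem hc (mem_inf.1 hc'mem).1, ?_⟩
      rw [Finset.forall_mem_insert, ← mul_assoc]
      exact ⟨fun h => hc'M₀ ((M₀.mul_mem_cancel_left hgcM₀).1 h),
        fun M hM h => hgc M hM ((M.mul_mem_cancel_right (hc't M hM)).1 h)⟩
    · exact ⟨c, hc, (Finset.forall_mem_insert _ _ _).2 ⟨hgcM₀, hgc⟩⟩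

theorem finite_monoidHom_of_fg [Group.FG G] (H : Type*) [Group H] [Finite H] :
    Finite (G →* H) := by
  obtain ⟨S, hS⟩ := Group.FG.out (G := G)
  refine Finite.of_injective (fun f : G →* H => fun x : (S : Set G) => f x) fun f f' h => ?_
  exact MonoidHom.eq_of_eqOn_dense hS fun x hx => congrFun h ⟨x, hx⟩

theorem finite_setOf_isMaximalNormal_finiteIndex [Group.FG G] {ι : Type*} [Finite ι]
    (H : ι → Type*) [∀ i, Group (H i)]
    (hH : ∀ (N : Subgroup G) [N.Normal], Finite (G ⧸ N) → IsSimpleGroup (G ⧸ N) →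
      ∃ i, Nonempty ((G ⧸ N) ≃* H i)) :
    {M : Subgroup G | M.IsMaximalNormal ∧ M.FiniteIndex}.Finite := by
  have hsub : {M : Subgroup G | M.IsMaximalNormal ∧ M.FiniteIndex} ⊆
      ⋃ i : {i // Finite (H i)}, Set.range fun f : G →* H i => f.ker := by
    rintro M ⟨hM, hMfin⟩
    have := hM.normal
    obtain ⟨i, ⟨e⟩⟩ := hH M inferInstance hM.isSimpleGroup_quotient
    refine Set.mem_iUnion.2
      ⟨⟨i, .of_equiv _ e.toEquiv⟩, (e : G ⧸ M →* H i).comp (QuotientGroup.mk' M), ?_⟩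
    exact (MonoidHom.ker_mulEquiv_comp _ e).trans (QuotientGroup.ker_mk' M)
  refine (Set.finite_iUnion fun i => ?_).subset hsub
  have := i.2
  have := finite_monoidHom_of_fg (G := G) (H i)
  exact Set.finite_range _

theorem Abelianization.of_surjective :
    Function.Surjective (Abelianization.of : G →* Abelianization G) :=
  QuotientGroup.mk_surjective

theorem eq_top_of_commutator_le {B : Subgroup G} (hB : commutator G ≤ B) {g : G} (hg : g ∈ B)
    (hgen : zpowers (Abelianization.of g) = ⊤) : B = ⊤ := by
  have hmap : B.map Abelianization.of = ⊤ :=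
    top_unique (hgen ▸ zpowers_le.2 (mem_map_of_mem _ hg))
  rw [← sup_eq_left.2 ((Abelianization.ker_of G).trans_le hB), ← comap_map_eq, hmap, comap_top]

theorem FinitelyAnnihilated.not_isCyclic_abelianization [Group.FG G]
    (hfin : {M : Subgroup G | M.IsMaximalNormal ∧ M.FiniteIndex}.Finite)
    (hFA : FinitelyAnnihilated G) : ¬ IsCyclic (Abelianization G) := by
  intro hcyc
  obtain ⟨x, hx⟩ := isCyclic_iff_exists_zpowers_eq_top.1 hcyc
  obtain ⟨g, rfl⟩ := Abelianization.of_surjective x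
  have hnonab :
      {M : Subgroup G | (M.IsMaximalNormal ∧ M.FiniteIndex) ∧ ¬ commutator G ≤ M}.Finite :=
    hfin.subset fun M hM => hM.1
  obtain ⟨c, hc, hgc⟩ := exists_mem_commutator_forall_mul_notMem hnonab.toFinset
    (fun M hM => (hnonab.mem_toFinset.1 hM).imp_left And.left) g
  obtain ⟨N, hN, hNtop, hNfin, hgcN⟩ := hFA (g * c)
  obtain ⟨B, hB, hNB⟩ := exists_le_isMaximalNormal hNtop
  have hBfin : B.FiniteIndex := finiteIndex_of_le hNB
  by_cases hBc : commutator G ≤ B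
  · have hc1 : Abelianization.of c = 1 := by rwa [← MonoidHom.mem_ker, Abelianization.ker_of]
    refine hB.ne_top (eq_top_of_commutator_le hBc (hNB hgcN) ?_)
    rwa [map_mul, hc1, mul_one]
  · exact hgc B (hnonab.mem_toFinset.2 ⟨⟨hB, hBfin⟩, hBc⟩) (hNB hgcN)

theorem FinitelyAnnihilated.of_surjective {H : Type*} [Group H] (hH : FinitelyAnnihilated H)
    {f : G →* H} (hf : Function.Surjective f) : FinitelyAnnihilated G := by
  intro g
  obtain ⟨N, hN, hNtop, hNfin, hgN⟩ := hH (f g)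
  refine ⟨N.comap f, hN.comap f, fun h => hNtop ?_, ⟨?_⟩, hgN⟩
  · rw [← map_comap_eq_self_of_surjective hf N, h, map_top_of_surjective f hf]
  · rw [index_comap_of_surjective N hf]
    exact FiniteIndex.index_ne_zero

theorem finitelyAnnihilated_of_not_isCyclic {A : Type*} [CommGroup A] [Group.FG A]
    (hA : ¬ IsCyclic A) : FinitelyAnnihilated A := by
  intro a
  have hT : zpowers a ≠ ⊤ := fun h => hA (isCyclic_iff_exists_zpowers_eq_top.2 ⟨a, h⟩)
  have := (zpowers a).normal_of_isMulCommutative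
  obtain ⟨B, hB, haB⟩ := exists_le_isMaximalNormal hT
  have := hB.normal
  have := hB.isSimpleGroup_quotient
  have : Finite (A ⧸ B) := IsSimpleGroup.finite
  exact ⟨B, hB.normal, hB.ne_top, finiteIndex_of_finite_quotient, haB (mem_zpowers a)⟩

end

/-- A finitely generated group with only finitely many distinct (isomorphism classes of)
finite simple quotients is finitely annihilated iff its abelianisation is non-cyclic. -/
theorem finitelyAnnihilated_iff_abelianization_not_cyclic_of_finitely_many_finite_simple_quotients
    (G : Type*) [Group G] (hfg : Group.FG G)
    (hfin : ∃ (k : ℕ) (H : Fin k → Type) (instH : ∀ i, Group (H i)),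
      ∀ (N : Subgroup G) (hN : N.Normal),
        letI := hN
        Finite (G ⧸ N) → IsSimpleGroup (G ⧸ N) →
          ∃ i, letI := instH i; Nonempty ((G ⧸ N) ≃* H i)) :
    FinitelyAnnihilated G ↔ ¬ IsCyclic (Abelianization G) := by
  obtain ⟨k, H, instH, hH⟩ := hfin
  refine ⟨fun hFA => hFA.not_isCyclic_abelianization ?_, fun hA => ?_⟩
  · exact finite_setOf_isMaximalNormal_finiteIndex H hH
  · have := Group.fg_of_surjective (Abelianization.of_surjective (G := G))
    exact (finitelyAnnihilated_of_not_isCyclic hA).of_surjective Abelianization.of_surjective
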